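/- With L an invertible N×N matrix, S invertible, β_LB^S = min over nonzero w of (wᵀLᵀS⁻ᵀS⁻¹Lw)/(wᵀw), and α_UB = max over nonzero w of (wᵀS⁻ᵀS⁻¹w)/(wᵀw): if Lu = f, then for any v ∈ ℝᴺ, ‖S⁻¹(u − v)‖ ≤ sqrt(α_UB) · ‖S⁻¹(f − Lv)‖ / sqrt(β_LB^S). -/

import Mathlib

open Matrix BigOperators

noncomputable def euclNorm {N : ℕ} (v : Fin N → ℝ) : ℝ := Real.sqrt (∑ i, (v i) ^ 2)

/-!
Write `e = u - v`. Since `L e = f - L v`, the residual norm is `‖S⁻¹ L e‖`, and the two Rayleigh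
quotient bounds give `‖S⁻¹ e‖² ≤ α ‖e‖²` and `β ‖e‖² ≤ ‖S⁻¹ L e‖²`. Chaining them yields
`‖S⁻¹ e‖² ≤ α ‖S⁻¹ L e‖² / β`; here `β > 0` because `S⁻¹ L` is invertible.
-/

lemma euclNorm_eq_sqrt_dotProduct {N : ℕ} (v : Fin N → ℝ) : euclNorm v = √(v ⬝ᵥ v) := by
  simp only [euclNorm, dotProduct, sq]

lemma dotProduct_transpose_mul_self_mulVec {m n R : Type*} [Fintype m] [Fintype n] [CommSemiring R]
    (A : Matrix m n R) (x : n → R) : x ⬝ᵥ (Aᵀ * A) *ᵥ x = A *ᵥ x ⬝ᵥ A *ᵥ x := by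
  rw [← mulVec_mulVec, dotProduct_mulVec, vecMul_transpose]

section RayleighQuotients

variable {n : Type*} [Fintype n]

def rayleighQuotients (A : Matrix n n ℝ) : Set ℝ :=
  {r | ∃ w : n → ℝ, w ≠ 0 ∧ r = w ⬝ᵥ A *ᵥ w / w ⬝ᵥ w}

lemma dotProduct_mulVec_le_of_mem_upperBounds_rayleighQuotients {A : Matrix n n ℝ} {α : ℝ}
    (hα : α ∈ upperBounds (rayleighQuotients A)) (x : n → ℝ) :
    x ⬝ᵥ A *ᵥ x ≤ α * (x ⬝ᵥ x) := by
  rcases eq_or_ne x 0 with rfl | hx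
  · simp
  · have hxx : 0 < x ⬝ᵥ x := dotProduct_self_star_pos_iff.2 hx
    rw [← div_le_iff₀ hxx]
    exact hα ⟨x, hx, rfl⟩

lemma mul_dotProduct_le_of_mem_lowerBounds_rayleighQuotients {A : Matrix n n ℝ} {β : ℝ}
    (hβ : β ∈ lowerBounds (rayleighQuotients A)) (x : n → ℝ) :
    β * (x ⬝ᵥ x) ≤ x ⬝ᵥ A *ᵥ x := by
  rcases eq_or_ne x 0 with rfl | hx
  · simp
  · have hxx : 0 < x ⬝ᵥ x := dotProduct_self_star_pos_iff.2 hx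
    rw [← le_div_iff₀ hxx]
    exact hβ ⟨x, hx, rfl⟩

lemma nonneg_of_mem_rayleighQuotients_transpose_mul_self {A : Matrix n n ℝ} {r : ℝ}
    (hr : r ∈ rayleighQuotients (Aᵀ * A)) : 0 ≤ r := by
  obtain ⟨w, -, rfl⟩ := hr
  rw [dotProduct_transpose_mul_self_mulVec]
  exact div_nonneg (dotProduct_self_star_nonneg _) (dotProduct_self_star_nonneg _)

lemma pos_of_mem_rayleighQuotients_transpose_mul_self [DecidableEq n] {A : Matrix n n ℝ}
    (hA : IsUnit A) {r : ℝ} (hr : r ∈ rayleighQuotients (Aᵀ * A)) : 0 < r := by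
  obtain ⟨w, hw, rfl⟩ := hr
  have hAw : A *ᵥ w ≠ 0 := fun h =>
    hw (mulVec_injective_iff_isUnit.2 hA (h.trans (mulVec_zero A).symm))
  rw [dotProduct_transpose_mul_self_mulVec]
  exact div_pos (dotProduct_self_star_pos_iff.2 hAw) (dotProduct_self_star_pos_iff.2 hw)

end RayleighQuotients

theorem stmt3 {N : ℕ} (L S : Matrix (Fin N) (Fin N) ℝ)
    (hL : IsUnit L) (hS : IsUnit S)
    (βS α : ℝ)
    (hβS : IsLeast {r : ℝ | ∃ w : Fin N → ℝ, w ≠ 0 ∧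
      r = dotProduct w ((Lᵀ * S⁻¹ᵀ * S⁻¹ * L).mulVec w) / dotProduct w w} βS)
    (hα : IsGreatest {r : ℝ | ∃ w : Fin N → ℝ, w ≠ 0 ∧
      r = dotProduct w ((S⁻¹ᵀ * S⁻¹).mulVec w) / dotProduct w w} α)
    (u f : Fin N → ℝ) (hu : L.mulVec u = f) :
    ∀ v : Fin N → ℝ,
      euclNorm (S⁻¹.mulVec (u - v)) ≤
        Real.sqrt α * euclNorm (S⁻¹.mulVec (f - L.mulVec v)) / Real.sqrt βS := by
  intro v
  rw [show Lᵀ * S⁻¹ᵀ * S⁻¹ * L = (S⁻¹ * L)ᵀ * (S⁻¹ * L) by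
    rw [transpose_mul, Matrix.mul_assoc]] at hβS
  have hβ_pos : 0 < βS := pos_of_mem_rayleighQuotients_transpose_mul_self
    ((isUnit_nonsing_inv_iff.2 hS).mul hL) hβS.1
  have hα_nonneg : 0 ≤ α := nonneg_of_mem_rayleighQuotients_transpose_mul_self hα.1
  have hresidual : S⁻¹ *ᵥ (f - L *ᵥ v) = (S⁻¹ * L) *ᵥ (u - v) := by
    rw [← hu, ← mulVec_sub, mulVec_mulVec]
  have hupper := dotProduct_mulVec_le_of_mem_upperBounds_rayleighQuotients hα.2 (u - v)
  have hlower := mul_dotProduct_le_of_mem_lowerBounds_rayleighQuotients hβS.2 (u - v)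
  rw [dotProduct_transpose_mul_self_mulVec] at hupper hlower
  rw [hresidual, euclNorm_eq_sqrt_dotProduct, euclNorm_eq_sqrt_dotProduct,
    ← Real.sqrt_mul hα_nonneg, ← Real.sqrt_div' _ hβ_pos.le]
  refine Real.sqrt_le_sqrt (hupper.trans ?_)
  rw [mul_div_assoc]
  exact mul_le_mul_of_nonneg_left ((le_div_iff₀' hβ_pos).2 hlower) hα_nonneg
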